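/- Let Φ be an equivalence (over isomorphisms s : L → L' and φ : V → V') between two standard split abelian extensions with data d = δ + θ + λ_l + λ_r on L ⊕ V and d' = δ' + θ' + λ_l' + λ_r' on L' ⊕ V', and write Φ(x) = s₁(x) + i₁(x), Φ(v) = i₂(v), where s₁ : L → L' is bijective. Define h : L' → V' by h(s₁(x)) = i₁(x). Then i₂(θ(x, y)) = θ'(s₁(x), s₁(y)) + D₁(h)(s₁(x), s₁(y)) for all x, y ∈ L; consequently the bilinear map (x', y') ↦ i₂(θ(s₁⁻¹(x'), s₁⁻¹(y'))) is a 2-cocycle of L' on V' whose class in Z²(L', V', λ')/B²(L', V') equals the class of θ'. -/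

import Mathlib

/- Basic notions for BiHom-Lie algebras. -/

section Core

variable {K : Type*} [Field K]
variable {M : Type*} [AddCommGroup M] [Module K M]

/-- The trilinear operation `f∘g` associated to two bilinear maps `f g` and
twisting maps `α β`:
`(f∘g)(a,b,c) = f(β²(a), g(β(b), α(c))) + f(β²(b), g(β(c), α(a))) + f(β²(c), g(β(a), α(b)))`. -/
def bhCirc (α β : M →ₗ[K] M) (f g : M →ₗ[K] M →ₗ[K] M) (a b c : M) : M :=
  f (β (β a)) (g (β b) (α c)) + f (β (β b)) (g (β c) (α a)) + f (β (β c)) (g (β a) (α b))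

/-- The bracket `[f,g] = f∘g + g∘f` of bilinear maps. -/
def bhBrk (α β : M →ₗ[K] M) (f g : M →ₗ[K] M →ₗ[K] M) (a b c : M) : M :=
  bhCirc α β f g a b c + bhCirc α β g f a b c

/-- `(M, d, α, β)` is a BiHom-Lie algebra: `α∘β = β∘α`, BiHom-skew-symmetry and
the BiHom-Jacobi condition. -/
def IsBiHomLie (d : M →ₗ[K] M →ₗ[K] M) (α β : M →ₗ[K] M) : Prop :=
  (∀ m, α (β m) = β (α m)) ∧
  (∀ x y, d (β x) (α y) = - d (β y) (α x)) ∧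
  (∀ x y z,
    d (β (β x)) (d (β y) (α z)) + d (β (β y)) (d (β z) (α x)) +
      d (β (β z)) (d (β x) (α y)) = 0)

/-- Multiplicativity: `α` and `β` are algebra morphisms for the bracket `d`. -/
def IsMultiplicative (d : M →ₗ[K] M →ₗ[K] M) (α β : M →ₗ[K] M) : Prop :=
  (∀ x y, α (d x y) = d (α x) (α y)) ∧ (∀ x y, β (d x y) = d (β x) (β y))

end Core

section Morph

variable {K : Type*} [Field K]
variable {M : Type*} [AddCommGroup M] [Module K M]
variable {N : Type*} [AddCommGroup N] [Module K N]

/-- A morphism of BiHom-Lie algebras. -/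
def IsBHMorphism (d : M →ₗ[K] M →ₗ[K] M) (α β : M →ₗ[K] M)
    (d' : N →ₗ[K] N →ₗ[K] N) (α' β' : N →ₗ[K] N) (f : M →ₗ[K] N) : Prop :=
  (∀ m, f (α m) = α' (f m)) ∧ (∀ m, f (β m) = β' (f m)) ∧
  (∀ m n, f (d m n) = d' (f m) (f n))

end Morph

section RepCo

variable {K : Type*} [Field K]
variable {L : Type*} [AddCommGroup L] [Module K L]
variable {V : Type*} [AddCommGroup V] [Module K V]

/-- A representation of the BiHom-Lie algebra `(L, δ, α, β)` on `(V, αV, βV)` given by a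
left action `lam_l` and a right action `lam_r`. -/
def IsBHRep (δ : L →ₗ[K] L →ₗ[K] L) (α β : L →ₗ[K] L) (αV βV : V →ₗ[K] V)
    (lam_l : L →ₗ[K] V →ₗ[K] V) (lam_r : V →ₗ[K] L →ₗ[K] V) : Prop :=
  (∀ (v : V) (y : L), lam_r (βV v) (α y) = - lam_l (β y) (αV v)) ∧
  (∀ (x y : L) (v : V),
    lam_r (βV (βV v)) (δ (β x) (α y)) =
      lam_l (β (β x)) (lam_r (βV v) (α y)) + lam_l (β (β y)) (lam_r (βV v) (α x)))

/-- A `2`-cocycle of `(L, δ, α, β)` with values in `V`, relative to the left action `lam_l`. -/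
def IsBH2Cocycle (δ : L →ₗ[K] L →ₗ[K] L) (α β : L →ₗ[K] L)
    (lam_l : L →ₗ[K] V →ₗ[K] V) (θ : L →ₗ[K] L →ₗ[K] V) : Prop :=
  (∀ x y, θ (β x) (α y) = - θ (β y) (α x)) ∧
  (∀ x y z,
    θ (β (β x)) (δ (β y) (α z)) - θ (β (β y)) (δ (β x) (α z)) +
      θ (β (β z)) (δ (β x) (α y)) +
      lam_l (β (β x)) (θ (β y) (α z)) - lam_l (β (β y)) (θ (β x) (α z)) +
      lam_l (β (β z)) (θ (β x) (α y)) = 0)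

/-- A `1`-cochain: a linear map commuting with the structure maps. -/
def IsBH1Cochain (α β : L →ₗ[K] L) (αV βV : V →ₗ[K] V) (h : L →ₗ[K] V) : Prop :=
  (∀ x, h (α x) = αV (h x)) ∧ (∀ x, h (β x) = βV (h x))

/-- The `1`-coboundary operator: `D₁(h)(x,y) = -h(δ(x,y)) + λ_l(x, h(y)) + λ_r(h(x), y)`. -/
def bhD1 (δ : L →ₗ[K] L →ₗ[K] L) (lam_l : L →ₗ[K] V →ₗ[K] V)
    (lam_r : V →ₗ[K] L →ₗ[K] V) (h : L →ₗ[K] V) : L →ₗ[K] L →ₗ[K] V :=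
  LinearMap.mk₂ K (fun x y => - h (δ x y) + lam_l x (h y) + lam_r (h x) y)
    (by intro m₁ m₂ n; simp [map_add]; abel)
    (by intro c m n; simp [map_smul, smul_add, smul_neg])
    (by intro m n₁ n₂; simp [map_add]; abel)
    (by intro c m n; simp [map_smul, smul_add, smul_neg])

/-- The bilinear map on `L ⊕ V` determined by data `δ, λ_l, λ_r, θ, μ`:
`d(x+v, y+w) = δ(x,y) + θ(x,y) + λ_l(x,w) + λ_r(v,y) + μ(v,w)`. -/
def bhStd (δ : L →ₗ[K] L →ₗ[K] L) (lam_l : L →ₗ[K] V →ₗ[K] V)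
    (lam_r : V →ₗ[K] L →ₗ[K] V) (θ : L →ₗ[K] L →ₗ[K] V) (μ : V →ₗ[K] V →ₗ[K] V) :
    (L × V) →ₗ[K] (L × V) →ₗ[K] (L × V) :=
  LinearMap.mk₂ K
    (fun p q => (δ p.1 q.1, θ p.1 q.1 + lam_l p.1 q.2 + lam_r p.2 q.1 + μ p.2 q.2))
    (by intro m₁ m₂ n; simp [Prod.ext_iff, map_add]; abel)
    (by intro c m n; simp [Prod.ext_iff, map_smul, smul_add])
    (by intro m n₁ n₂; simp [Prod.ext_iff, map_add]; abel)
    (by intro c m n; simp [Prod.ext_iff, map_smul, smul_add])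

end RepCo

section Ext

variable {K : Type*} [Field K]
variable {V : Type*} [AddCommGroup V] [Module K V]
variable {M : Type*} [AddCommGroup M] [Module K M]
variable {L : Type*} [AddCommGroup L] [Module K L]

/-- `0 → (V,μ,αV,βV) →ⁱ (M,d,αM,βM) →^π (L,δ,α,β) → 0` is an extension of BiHom-Lie
algebras: all three are BiHom-Lie algebras, `i, π` are morphisms, `i` injective,
`π` surjective, and `Im i = ker π`. -/
def IsBHExtension (μ : V →ₗ[K] V →ₗ[K] V) (αV βV : V →ₗ[K] V)
    (d : M →ₗ[K] M →ₗ[K] M) (αM βM : M →ₗ[K] M)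
    (δ : L →ₗ[K] L →ₗ[K] L) (α β : L →ₗ[K] L)
    (i : V →ₗ[K] M) (π : M →ₗ[K] L) : Prop :=
  IsBiHomLie μ αV βV ∧ IsBiHomLie d αM βM ∧ IsBiHomLie δ α β ∧
  IsBHMorphism μ αV βV d αM βM i ∧ IsBHMorphism d αM βM δ α β π ∧
  Function.Injective i ∧ Function.Surjective π ∧ LinearMap.range i = LinearMap.ker π

/-- The extension is split: there is a BiHom-subalgebra of `M` complementary to `ker π`. -/
def IsBHSplit (d : M →ₗ[K] M →ₗ[K] M) (αM βM : M →ₗ[K] M) (π : M →ₗ[K] L) : Prop :=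
  ∃ S : Submodule K M, (∀ m ∈ S, αM m ∈ S) ∧ (∀ m ∈ S, βM m ∈ S) ∧
    (∀ m ∈ S, ∀ n ∈ S, d m n ∈ S) ∧ IsCompl S (LinearMap.ker π)

end Ext


/-!
Write `Φ(x, v) = (s x, i₁ x + φ v)` and `h = i₁ ∘ s⁻¹`. Comparing second components of
`Φ(d((x,0),(y,0))) = d'(Φ(x,0), Φ(y,0))` gives `φ(θ(x,y)) + h(δ'(s x, s y)) =
θ'(s x, s y) + λ_l'(s x, h(s y)) + λ_r'(h(s x), s y)`, i.e. `φ ∘ θ ∘ (s⁻¹ × s⁻¹) = θ' + D₁ h`.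
The transported map is a cocycle because `(s⁻¹, φ)` intertwines `λ_l'` with `λ_l`, and `h`
commutes with the structure maps because `Φ` does.
-/

section Transport

open LinearMap

variable {K : Type*} [Field K]
  {L : Type*} [AddCommGroup L] [Module K L] {V : Type*} [AddCommGroup V] [Module K V]
  {L' : Type*} [AddCommGroup L'] [Module K L'] {V' : Type*} [AddCommGroup V'] [Module K V']

theorem IsBHMorphism.symm {δ : L →ₗ[K] L →ₗ[K] L} {α β : L →ₗ[K] L}
    {δ' : L' →ₗ[K] L' →ₗ[K] L'} {α' β' : L' →ₗ[K] L'} {s : L ≃ₗ[K] L'}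
    (hs : IsBHMorphism δ α β δ' α' β' (s : L →ₗ[K] L')) :
    IsBHMorphism δ' α' β' δ α β (s.symm : L' →ₗ[K] L) := by
  obtain ⟨hα, hβ, hδ⟩ := hs
  simp only [LinearEquiv.coe_coe] at hα hβ hδ
  refine ⟨fun m => s.injective ?_, fun m => s.injective ?_, fun m n => s.injective ?_⟩ <;>
    simp [hα, hβ, hδ]

theorem IsBH2Cocycle.compr₂_compl₁₂ {δ : L →ₗ[K] L →ₗ[K] L} {α β : L →ₗ[K] L}
    {lam_l : L →ₗ[K] V →ₗ[K] V} {θ : L →ₗ[K] L →ₗ[K] V} (hθ : IsBH2Cocycle δ α β lam_l θ)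
    {δ' : L' →ₗ[K] L' →ₗ[K] L'} {α' β' : L' →ₗ[K] L'} {lam_l' : L' →ₗ[K] V' →ₗ[K] V'}
    {g : L' →ₗ[K] L} (hg : IsBHMorphism δ' α' β' δ α β g) (φ : V →ₗ[K] V')
    (hφ : ∀ x w, φ (lam_l (g x) w) = lam_l' x (φ w)) :
    IsBH2Cocycle δ' α' β' lam_l' ((θ.compl₁₂ g g).compr₂ φ) := by
  obtain ⟨hα, hβ, hδ⟩ := hg
  refine ⟨fun x y => ?_, fun x y z => ?_⟩
  · simp only [compr₂_apply, compl₁₂_apply, hα, hβ]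
    rw [hθ.1, map_neg]
  · simp only [compr₂_apply, compl₁₂_apply, ← hφ, hα, hβ, hδ]
    simpa [map_add, map_sub] using congrArg φ (hθ.2 (g x) (g y) (g z))

/-- The block `i₁ : L → V'` of `Φ(x, v) = (s₁ x, i₁ x + i₂ v)`. -/
def lowerLeftBlock (Φ : (L × V) →ₗ[K] (L' × V')) : L →ₗ[K] V' :=
  snd K L' V' ∘ₗ Φ ∘ₗ inl K L V

@[simp]
theorem lowerLeftBlock_apply (Φ : (L × V) →ₗ[K] (L' × V')) (x : L) :
    lowerLeftBlock Φ x = (Φ (x, 0)).2 :=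
  rfl

theorem lowerLeftBlock_comp_commute {Φ : (L × V) →ₗ[K] (L' × V')} {α : L →ₗ[K] L}
    {αV : V →ₗ[K] V} {α' : L' →ₗ[K] L'} {αV' : V' →ₗ[K] V'}
    (hΦ : ∀ p, Φ (prodMap α αV p) = prodMap α' αV' (Φ p))
    {g : L' →ₗ[K] L} (hg : ∀ x, g (α' x) = α (g x)) (x : L') :
    (lowerLeftBlock Φ ∘ₗ g) (α' x) = αV' ((lowerLeftBlock Φ ∘ₗ g) x) := by
  simpa [hg] using congrArg Prod.snd (hΦ (g x, 0))

section StandardExtension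

variable {δ : L →ₗ[K] L →ₗ[K] L} {lam_l : L →ₗ[K] V →ₗ[K] V} {lam_r : V →ₗ[K] L →ₗ[K] V}
  {θ : L →ₗ[K] L →ₗ[K] V} {δ' : L' →ₗ[K] L' →ₗ[K] L'} {lam_l' : L' →ₗ[K] V' →ₗ[K] V'}
  {lam_r' : V' →ₗ[K] L' →ₗ[K] V'} {θ' : L' →ₗ[K] L' →ₗ[K] V'}
  {Φ : (L × V) →ₗ[K] (L' × V')} {φ : V →ₗ[K] V'}

theorem map_lam_l_of_bhStd {s : L →ₗ[K] L'}
    (hΦ : ∀ m n, Φ (bhStd δ lam_l lam_r θ 0 m n) = bhStd δ' lam_l' lam_r' θ' 0 (Φ m) (Φ n))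
    (hΦi : ∀ v, Φ (0, v) = (0, φ v)) (hΦπ : ∀ p, (Φ p).1 = s p.1) (x : L) (w : V) :
    φ (lam_l x w) = lam_l' (s x) (φ w) := by
  simpa [bhStd, hΦi, hΦπ] using congrArg Prod.snd (hΦ (x, 0) (0, w))

theorem map_θ_add_lowerLeftBlock_map_δ {s : L →ₗ[K] L'}
    (hΦ : ∀ m n, Φ (bhStd δ lam_l lam_r θ 0 m n) = bhStd δ' lam_l' lam_r' θ' 0 (Φ m) (Φ n))
    (hΦi : ∀ v, Φ (0, v) = (0, φ v)) (hΦπ : ∀ p, (Φ p).1 = s p.1) (x y : L) :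
    φ (θ x y) + lowerLeftBlock Φ (δ x y) =
      θ' (s x) (s y) + lam_l' (s x) (lowerLeftBlock Φ y) + lam_r' (lowerLeftBlock Φ x) (s y) := by
  have hsplit : Φ (δ x y, θ x y) = Φ (δ x y, 0) + (0, φ (θ x y)) := by
    rw [← hΦi, ← map_add, Prod.mk_add_mk, add_zero, zero_add]
  have := congrArg Prod.snd (hΦ (x, 0) (y, 0))
  simp only [bhStd, mk₂_apply, map_zero, LinearMap.zero_apply, add_zero, hΦπ] at this
  rw [hsplit, Prod.snd_add] at this
  simpa [add_comm] using this

theorem map_θ_eq_add_bhD1 {s : L ≃ₗ[K] L'} {α β : L →ₗ[K] L} {α' β' : L' →ₗ[K] L'}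
    (hs : IsBHMorphism δ α β δ' α' β' (s : L →ₗ[K] L'))
    (hΦ : ∀ m n, Φ (bhStd δ lam_l lam_r θ 0 m n) = bhStd δ' lam_l' lam_r' θ' 0 (Φ m) (Φ n))
    (hΦi : ∀ v, Φ (0, v) = (0, φ v)) (hΦπ : ∀ p, (Φ p).1 = s p.1) (x y : L) :
    φ (θ x y) = θ' (s x) (s y) +
      bhD1 δ' lam_l' lam_r' (lowerLeftBlock Φ ∘ₗ (s.symm : L' →ₗ[K] L)) (s x) (s y) := by
  have key := map_θ_add_lowerLeftBlock_map_δ (s := (s : L →ₗ[K] L')) hΦ hΦi hΦπ x y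
  simp only [LinearEquiv.coe_coe] at key
  have hδ : δ x y = s.symm (δ' (s x) (s y)) := by
    simpa using congrArg s.symm (hs.2.2 x y)
  simp only [bhD1, mk₂_apply, coe_comp, Function.comp_apply, LinearEquiv.coe_coe,
    LinearEquiv.symm_apply_apply]
  rw [← hδ]
  linear_combination (norm := abel) key

end StandardExtension

end Transport

theorem stmt10_general {K : Type*} [Field K]
    {L : Type*} [AddCommGroup L] [Module K L]
    {V : Type*} [AddCommGroup V] [Module K V]
    {L' : Type*} [AddCommGroup L'] [Module K L']
    {V' : Type*} [AddCommGroup V'] [Module K V']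
    -- unprimed standard split abelian extension data
    (δ : L →ₗ[K] L →ₗ[K] L) (α β : L →ₗ[K] L)
    (αV βV : V →ₗ[K] V)
    (lam_l : L →ₗ[K] V →ₗ[K] V) (lam_r : V →ₗ[K] L →ₗ[K] V)
    (θ : L →ₗ[K] L →ₗ[K] V) (hθ : IsBH2Cocycle δ α β lam_l θ)
    -- primed standard split abelian extension data
    (δ' : L' →ₗ[K] L' →ₗ[K] L') (α' β' : L' →ₗ[K] L')
    (αV' βV' : V' →ₗ[K] V')
    (lam_l' : L' →ₗ[K] V' →ₗ[K] V') (lam_r' : V' →ₗ[K] L' →ₗ[K] V')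
    (θ' : L' →ₗ[K] L' →ₗ[K] V')
    -- the equivalence (Φ, s, φ)
    (Φ : (L × V) ≃ₗ[K] (L' × V'))
    (hΦ : IsBHMorphism (bhStd δ lam_l lam_r θ 0)
      (LinearMap.prodMap α αV) (LinearMap.prodMap β βV)
      (bhStd δ' lam_l' lam_r' θ' 0)
      (LinearMap.prodMap α' αV') (LinearMap.prodMap β' βV')
      (Φ : (L × V) →ₗ[K] (L' × V')))
    (s : L ≃ₗ[K] L') (hs : IsBHMorphism δ α β δ' α' β' (s : L →ₗ[K] L'))
    (φ : V ≃ₗ[K] V')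
    (hΦi : ∀ v : V, Φ (0, v) = (0, φ v))
    (hΦπ : ∀ p : L × V, (Φ p).1 = s p.1) :
    -- `h : L' → V'` is (uniquely) determined by `h(s₁(x)) = i₁(x)`
    ∃ hmap : L' →ₗ[K] V',
      (∀ x : L, hmap ((Φ (x, 0)).1) = (Φ (x, 0)).2) ∧
      -- i₂(θ(x,y)) = θ'(s₁(x), s₁(y)) + D₁(h)(s₁(x), s₁(y))
      (∀ x y : L,
        (Φ (0, θ x y)).2 =
          θ' ((Φ (x, 0)).1) ((Φ (y, 0)).1) +
            bhD1 δ' lam_l' lam_r' hmap ((Φ (x, 0)).1) ((Φ (y, 0)).1)) ∧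
      -- the transported cocycle and its cohomology class
      ∃ θt : L' →ₗ[K] L' →ₗ[K] V',
        (∀ x' y' : L', θt x' y' = (Φ (0, θ (s.symm x') (s.symm y'))).2) ∧
        IsBH2Cocycle δ' α' β' lam_l' θt ∧
        ∃ k : L' →ₗ[K] V', IsBH1Cochain α' β' αV' βV' k ∧
          ∀ x' y' : L', θt x' y' = θ' x' y' + bhD1 δ' lam_l' lam_r' k x' y' := by
  have hΦi' : ∀ v, (Φ : (L × V) →ₗ[K] (L' × V')) (0, v) = (0, (φ : V →ₗ[K] V') v) := hΦi
  have hΦπ' : ∀ p, ((Φ : (L × V) →ₗ[K] (L' × V')) p).1 = s p.1 := hΦπ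
  set h := lowerLeftBlock (Φ : (L × V) →ₗ[K] (L' × V')) ∘ₗ (s.symm : L' →ₗ[K] L)
  have hθ_eq := map_θ_eq_add_bhD1 hs hΦ.2.2 hΦi' hΦπ'
  have hlam := map_lam_l_of_bhStd hΦ.2.2 hΦi' hΦπ'
  have hcochain : IsBH1Cochain α' β' αV' βV' h :=
    ⟨lowerLeftBlock_comp_commute hΦ.1 hs.symm.1, lowerLeftBlock_comp_commute hΦ.2.1 hs.symm.2.1⟩
  set θt := (θ.compl₁₂ (s.symm : L' →ₗ[K] L) (s.symm : L' →ₗ[K] L)).compr₂ (φ : V →ₗ[K] V')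
  have hcocycle : IsBH2Cocycle δ' α' β' lam_l' θt :=
    hθ.compr₂_compl₁₂ hs.symm _ fun x w => by simpa using hlam (s.symm x) w
  refine ⟨h, fun x => ?_, fun x y => ?_, θt, fun x' y' => ?_, hcocycle, h, hcochain,
    fun x' y' => ?_⟩
  · simp [h, hΦπ]
  · simpa [hΦi, hΦπ] using hθ_eq x y
  · simp [θt, hΦi]
  · simpa [θt] using hθ_eq (s.symm x') (s.symm y')

/-- Let `Φ` be an equivalence (over `s : L → L'` and `φ : V → V'`) between
two standard split abelian extensions, write `Φ(x) = s₁(x) + i₁(x)`, `Φ(v) = i₂(v)`, with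
`s₁` bijective, and define `h : L' → V'` by `h(s₁(x)) = i₁(x)`. Then
`i₂(θ(x,y)) = θ'(s₁(x), s₁(y)) + D₁(h)(s₁(x), s₁(y))`; consequently the bilinear map
`(x', y') ↦ i₂(θ(s₁⁻¹(x'), s₁⁻¹(y')))` is a `2`-cocycle of `L'` on `V'` whose cohomology
class equals the class of `θ'`. -/
theorem stmt10 {K : Type*} [Field K]
    {L : Type*} [AddCommGroup L] [Module K L]
    {V : Type*} [AddCommGroup V] [Module K V]
    {L' : Type*} [AddCommGroup L'] [Module K L']
    {V' : Type*} [AddCommGroup V'] [Module K V']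
    -- unprimed standard split abelian extension data
    (δ : L →ₗ[K] L →ₗ[K] L) (α β : L →ₗ[K] L) (hL : IsBiHomLie δ α β)
    (αV βV : V →ₗ[K] V)
    (lam_l : L →ₗ[K] V →ₗ[K] V) (lam_r : V →ₗ[K] L →ₗ[K] V)
    (hrep : IsBHRep δ α β αV βV lam_l lam_r)
    (θ : L →ₗ[K] L →ₗ[K] V) (hθ : IsBH2Cocycle δ α β lam_l θ)
    -- primed standard split abelian extension data
    (δ' : L' →ₗ[K] L' →ₗ[K] L') (α' β' : L' →ₗ[K] L') (hL' : IsBiHomLie δ' α' β')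
    (αV' βV' : V' →ₗ[K] V')
    (lam_l' : L' →ₗ[K] V' →ₗ[K] V') (lam_r' : V' →ₗ[K] L' →ₗ[K] V')
    (hrep' : IsBHRep δ' α' β' αV' βV' lam_l' lam_r')
    (θ' : L' →ₗ[K] L' →ₗ[K] V') (hθ' : IsBH2Cocycle δ' α' β' lam_l' θ')
    -- the equivalence (Φ, s, φ)
    (Φ : (L × V) ≃ₗ[K] (L' × V'))
    (hΦ : IsBHMorphism (bhStd δ lam_l lam_r θ 0)
      (LinearMap.prodMap α αV) (LinearMap.prodMap β βV)
      (bhStd δ' lam_l' lam_r' θ' 0)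
      (LinearMap.prodMap α' αV') (LinearMap.prodMap β' βV')
      (Φ : (L × V) →ₗ[K] (L' × V')))
    (s : L ≃ₗ[K] L') (hs : IsBHMorphism δ α β δ' α' β' (s : L →ₗ[K] L'))
    (φ : V ≃ₗ[K] V')
    (hφα : ∀ v, φ (αV v) = αV' (φ v)) (hφβ : ∀ v, φ (βV v) = βV' (φ v))
    (hΦi : ∀ v : V, Φ (0, v) = (0, φ v))
    (hΦπ : ∀ p : L × V, (Φ p).1 = s p.1)
    -- `s₁ : L → L'`, `x ↦ (Φ(x,0)).1`, is bijective
    (hs₁ : Function.Bijective fun x : L => (Φ (x, 0)).1) :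
    -- `h : L' → V'` is (uniquely) determined by `h(s₁(x)) = i₁(x)`
    ∃ hmap : L' →ₗ[K] V',
      (∀ x : L, hmap ((Φ (x, 0)).1) = (Φ (x, 0)).2) ∧
      -- i₂(θ(x,y)) = θ'(s₁(x), s₁(y)) + D₁(h)(s₁(x), s₁(y))
      (∀ x y : L,
        (Φ (0, θ x y)).2 =
          θ' ((Φ (x, 0)).1) ((Φ (y, 0)).1) +
            bhD1 δ' lam_l' lam_r' hmap ((Φ (x, 0)).1) ((Φ (y, 0)).1)) ∧
      -- the transported cocycle and its cohomology class
      ∃ θt : L' →ₗ[K] L' →ₗ[K] V',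
        (∀ x' y' : L', θt x' y' = (Φ (0, θ (s.symm x') (s.symm y'))).2) ∧
        IsBH2Cocycle δ' α' β' lam_l' θt ∧
        ∃ k : L' →ₗ[K] V', IsBH1Cochain α' β' αV' βV' k ∧
          ∀ x' y' : L', θt x' y' = θ' x' y' + bhD1 δ' lam_l' lam_r' k x' y' :=
  stmt10_general δ α β αV βV lam_l lam_r θ hθ δ' α' β' αV' βV' lam_l' lam_r' θ' Φ hΦ s hs φ hΦi hΦπ
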